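/- In an acyclic MEMDP, if there exists a winning policy for an almost-sure reachability objective, then there exists a deterministic winning policy. -/

import Mathlib

open scoped Classical

/-- Probability of reaching the target set `T` within `n` steps, starting
from state `s` with history `h`, under transition kernel `p` and
(history-dependent, randomized) policy `σ`. The probability of reaching `T`
is the supremum over `n` of these step-bounded probabilities. -/
noncomputable def reachN {S A : Type*} [Fintype S] [Fintype A]
    (p : S → A → S → ℝ) (σ : List S → A → ℝ) (T : Set S) :
    ℕ → List S → S → ℝ
  | 0, _, s => if s ∈ T then 1 else 0
  | n + 1, h, s =>
      if s ∈ T then 1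
      else ∑ a, σ (h ++ [s]) a * ∑ s', p s a s' * reachN p σ T n (h ++ [s]) s'

/-- A randomized history-dependent policy: a probability distribution over
actions for every history. -/
def IsPolicy {S A : Type*} [Fintype A] (σ : List S → A → ℝ) : Prop :=
  ∀ h : List S, (∀ a, 0 ≤ σ h a) ∧ ∑ a, σ h a = 1

/-- A stochastic transition kernel. -/
def IsKernel {S A : Type*} [Fintype S] (p : S → A → S → ℝ) : Prop :=
  ∀ s a, (∀ s', 0 ≤ p s a s') ∧ ∑ s', p s a s' = 1

/-- Reachability between states of the MDP `𝒩_i`. -/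
def MdpReach {S A I : Type*} (p : I → S → A → S → ℝ) (i : I) : S → S → Prop :=
  Relation.ReflTransGen (fun s s' => ∃ a : A, 0 < p i s a s')

/-- A MEMDP is acyclic if in every environment each state is either absorbing
or not reachable from any of its successor states. -/
def AcyclicMEMDP {S A I : Type*} (p : I → S → A → S → ℝ) : Prop :=
  ∀ (i : I) (s : S),
    ({t | MdpReach (A := A) p i s t} = {s}) ∨
    ∀ (a : A) (s' : S), 0 < p i s a s' → ¬ MdpReach (A := A) p i s' s

/-- `σ` is winning for the MEMDP: in every environment, the target is reached
almost-surely from the initial distribution. -/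
def MemdpWinning {S A I : Type*} [Fintype S] [Fintype A]
    (p : I → S → A → S → ℝ) (ι : S → ℝ) (T : Set S)
    (σ : List S → A → ℝ) : Prop :=
  ∀ i : I, (⨆ n, ∑ s, ι s * reachN (p i) σ T n [] s) = 1

section Aux

variable {S A : Type*} [Fintype S] [Fintype A]
  {p : S → A → S → ℝ} {σ : List S → A → ℝ} {T : Set S}

lemma reachN_nonneg (hp : IsKernel p) (hσ : ∀ h a, (0:ℝ) ≤ σ h a) :
    ∀ n h s, 0 ≤ reachN p σ T n h s := by
  intro n
  induction n with
  | zero => intro h s; rw [reachN]; split <;> norm_num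
  | succ n ih =>
      intro h s; rw [reachN]
      split
      · norm_num
      · refine Finset.sum_nonneg fun a _ => mul_nonneg (hσ _ _) ?_
        exact Finset.sum_nonneg fun s' _ => mul_nonneg ((hp s a).1 s') (ih _ _)

lemma reachN_le_one (hp : IsKernel p) (hσ : IsPolicy σ) :
    ∀ n h s, reachN p σ T n h s ≤ 1 := by
  intro n
  induction n with
  | zero => intro h s; rw [reachN]; split <;> norm_num
  | succ n ih =>
      intro h s; rw [reachN]
      split
      · norm_num
      · calc ∑ a, σ (h ++ [s]) a * ∑ s', p s a s' * reachN p σ T n (h ++ [s]) s'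
            ≤ ∑ a, σ (h ++ [s]) a * 1 := by
              refine Finset.sum_le_sum fun a _ => mul_le_mul_of_nonneg_left ?_ ((hσ _).1 a)
              calc ∑ s', p s a s' * reachN p σ T n (h ++ [s]) s'
                  ≤ ∑ s', p s a s' * 1 :=
                    Finset.sum_le_sum fun s' _ =>
                      mul_le_mul_of_nonneg_left (ih _ _) ((hp s a).1 s')
                _ = 1 := by simp [(hp s a).2]
          _ = 1 := by simp [(hσ _).2]

lemma reachN_mono (hp : IsKernel p) (hσ : ∀ h a, (0:ℝ) ≤ σ h a) :
    ∀ n h s, reachN p σ T n h s ≤ reachN p σ T (n+1) h s := by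
  intro n
  induction n with
  | zero =>
      intro h s
      rw [reachN, reachN]
      split
      · norm_num
      · exact Finset.sum_nonneg fun a _ => mul_nonneg (hσ _ _)
          (Finset.sum_nonneg fun s' _ => mul_nonneg ((hp s a).1 s')
            (reachN_nonneg hp hσ _ _ _))
  | succ n ih =>
      intro h s
      rw [reachN]
      conv_rhs => rw [reachN]
      split
      · norm_num
      · refine Finset.sum_le_sum fun a _ => mul_le_mul_of_nonneg_left ?_ (hσ _ _)
        exact Finset.sum_le_sum fun s' _ =>
          mul_le_mul_of_nonneg_left (ih _ _) ((hp s a).1 s')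

/-- `reachN n h s` only depends on the policy at histories with length in
`(h.length, h.length + n]`. -/
lemma reachN_congr {σ₁ σ₂ : List S → A → ℝ} :
    ∀ n h s, (∀ l : List S, h.length < l.length → l.length ≤ h.length + n →
        σ₁ l = σ₂ l) →
      reachN p σ₁ T n h s = reachN p σ₂ T n h s := by
  intro n
  induction n with
  | zero => intro h s _; rw [reachN, reachN]
  | succ n ih =>
      intro h s hag
      rw [reachN]
      conv_rhs => rw [reachN]
      split
      · rfl
      · refine Finset.sum_congr rfl fun a _ => ?_
        rw [hag (h ++ [s]) (by simp) (by simp only [List.length_append, List.length_singleton]; omega)]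
        refine congrArg _ (Finset.sum_congr rfl fun s' _ => ?_)
        rw [ih (h ++ [s]) s' fun l hl1 hl2 => hag l
          (by simp only [List.length_append, List.length_singleton] at hl1 ⊢; omega)
          (by simp only [List.length_append, List.length_singleton] at hl2 ⊢; omega)]

set_option linter.unusedSectionVars false

section Stab

variable (q : S → A → S → ℝ)

/-- One-step reachability relation of a single MDP. -/
def stepRel : S → S → Prop := fun s s' => ∃ a : A, 0 < q s a s'

/-- Number of states reachable from `s`. -/
noncomputable def rnk (s : S) : ℕ :=
  (Finset.univ.filter (fun t => Relation.ReflTransGen (stepRel q) s t)).card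

variable {q}

lemma rnk_pos (s : S) : 0 < rnk q s :=
  Finset.card_pos.2 ⟨s, by simp [Relation.ReflTransGen.refl]⟩

lemma rnk_le_card (s : S) : rnk q s ≤ Fintype.card S :=
  Finset.card_filter_le _ _

lemma rnk_lt_of_step {s s' : S}
    (hne : ∀ (a : A) (t : S), 0 < q s a t → ¬ Relation.ReflTransGen (stepRel q) t s)
    {a : A} (ha : 0 < q s a s') : rnk q s' < rnk q s := by
  apply Finset.card_lt_card
  constructor
  · intro t ht
    simp only [Finset.mem_filter, Finset.mem_univ, true_and] at ht ⊢
    exact Relation.ReflTransGen.trans (Relation.ReflTransGen.single ⟨a, ha⟩) ht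
  · intro hsub
    have hs : s ∈ Finset.univ.filter (fun t => Relation.ReflTransGen (stepRel q) s t) := by
      simp [Relation.ReflTransGen.refl]
    have := hsub hs
    simp only [Finset.mem_filter, Finset.mem_univ, true_and] at this
    exact hne a s' ha this

/-- From an absorbing state outside `T`, the target is never reached. -/
lemma reachN_absorbing (hq : IsKernel q) {s : S}
    (habs : ∀ (a : A) (s' : S), 0 < q s a s' → s' = s) (hsT : s ∉ T) :
    ∀ n h, reachN q σ T n h s = 0 := by
  intro n
  induction n with
  | zero => intro h; rw [reachN]; exact if_neg hsT
  | succ n ih =>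
      intro h
      rw [reachN, if_neg hsT]
      refine Finset.sum_eq_zero fun a _ => ?_
      have : ∑ s', q s a s' * reachN q σ T n (h ++ [s]) s' = 0 := by
        refine Finset.sum_eq_zero fun s' _ => ?_
        by_cases hs' : s' = s
        · rw [hs', ih]; ring
        · have : q s a s' = 0 := by
            rcases lt_or_eq_of_le ((hq s a).1 s') with hlt | heq
            · exact absurd (habs a s' hlt) hs'
            · exact heq.symm
          rw [this]; ring
      rw [this]; ring

/-- Acyclicity of one environment. -/
def AcyclicOne (q : S → A → S → ℝ) : Prop :=
  ∀ s : S, ({t | Relation.ReflTransGen (stepRel q) s t} = {s}) ∨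
    ∀ (a : A) (s' : S), 0 < q s a s' → ¬ Relation.ReflTransGen (stepRel q) s' s

lemma reachN_succ_eq (hq : IsKernel q) (hacy : AcyclicOne q) :
    ∀ (k : ℕ) (s : S), rnk q s ≤ k → ∀ n, rnk q s ≤ n → ∀ h,
      reachN q σ T (n + 1) h s = reachN q σ T n h s := by
  intro k
  induction k with
  | zero => intro s hs; exact absurd (lt_of_lt_of_le (rnk_pos s) hs) (by simp)
  | succ k ih =>
      intro s hsk n hn h
      have hn1 : 1 ≤ n := le_trans (rnk_pos s) hn
      by_cases hsT : s ∈ T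
      · obtain ⟨m, rfl⟩ := Nat.exists_eq_add_of_le hn1
        rw [reachN, if_pos hsT]
        rw [show 1 + m = m + 1 by ring, reachN, if_pos hsT]
      · rcases hacy s with habs | hne
        · have habs' : ∀ (a : A) (s' : S), 0 < q s a s' → s' = s := by
            intro a s' ha
            have : s' ∈ {t | Relation.ReflTransGen (stepRel q) s t} :=
              Relation.ReflTransGen.single ⟨a, ha⟩
            rwa [habs] at this
          rw [reachN_absorbing hq habs' hsT, reachN_absorbing hq habs' hsT]
        · obtain ⟨m, rfl⟩ := Nat.exists_eq_add_of_le hn1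
          rw [show 1 + m = m + 1 by ring]
          rw [reachN, if_neg hsT]
          conv_rhs => rw [reachN, if_neg hsT]
          refine Finset.sum_congr rfl fun a _ => congrArg _ ?_
          refine Finset.sum_congr rfl fun s' _ => ?_
          rcases lt_or_eq_of_le ((hq s a).1 s') with hlt | heq
          · have hlt' : rnk q s' < rnk q s := rnk_lt_of_step hne hlt
            rw [ih s' (by omega) m (by omega)]
          · rw [← heq]; ring

lemma reachN_stab (hq : IsKernel q) (hacy : AcyclicOne q) {n : ℕ}
    (hn : Fintype.card S ≤ n) (h : List S) (s : S) :
    reachN q σ T n h s = reachN q σ T (Fintype.card S) h s := by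
  induction n with
  | zero => rw [Nat.le_zero.1 hn]
  | succ n ih =>
      rcases Nat.lt_or_ge (Fintype.card S) (n + 1) with hlt | hge
      · have hn' : Fintype.card S ≤ n := by omega
        rw [reachN_succ_eq hq hacy (rnk q s) s le_rfl n
          (le_trans (rnk_le_card s) hn'), ih hn']
      · have : Fintype.card S = n + 1 := le_antisymm hn hge
        rw [this]

/-- For an acyclic environment the supremum of step-bounded reachability
probabilities is attained at horizon `card S`. -/
lemma iSup_value_eq (hq : IsKernel q) (hσ : IsPolicy σ) (hacy : AcyclicOne q)
    {ι : S → ℝ} (hι0 : ∀ s, 0 ≤ ι s) :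
    (⨆ n, ∑ s, ι s * reachN q σ T n [] s)
      = ∑ s, ι s * reachN q σ T (Fintype.card S) [] s := by
  set f : ℕ → ℝ := fun n => ∑ s, ι s * reachN q σ T n [] s with hf
  have hmono : Monotone f := by
    apply monotone_nat_of_le_succ
    intro n
    exact Finset.sum_le_sum fun s _ =>
      mul_le_mul_of_nonneg_left (reachN_mono hq (fun h a => (hσ h).1 a) n [] s) (hι0 s)
  have hbd : ∀ n, f n ≤ f (Fintype.card S) := by
    intro n
    rcases le_or_gt n (Fintype.card S) with hle | hlt
    · exact hmono hle
    · rw [hf]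
      simp only
      rw [show (∑ s, ι s * reachN q σ T n [] s) =
        ∑ s, ι s * reachN q σ T (Fintype.card S) [] s from
        Finset.sum_congr rfl fun s _ => by rw [reachN_stab hq hacy hlt.le]]
  have hBdd : BddAbove (Set.range f) := ⟨f (Fintype.card S), by rintro x ⟨n, rfl⟩; exact hbd n⟩
  exact le_antisymm (ciSup_le hbd) (le_ciSup (f := f) hBdd (Fintype.card S))

end Stab

section Affine

lemma sum_mul_swap {α β : Type*} [Fintype α] [Fintype β]
    (t : α → ℝ) (g : β → ℝ) (r : α → β → ℝ) :
    ∑ a, t a * ∑ b, g b * r a b = ∑ b, g b * ∑ a, t a * r a b := by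
  simp only [Finset.mul_sum]
  rw [Finset.sum_comm]
  exact Finset.sum_congr rfl fun b _ => Finset.sum_congr rfl fun a _ => by ring

variable [DecidableEq A] {q : S → A → S → ℝ}

/-- `reachN` is affine in the policy's behaviour at one fixed history `h₀`
that is strictly longer than the current history. -/
lemma reachN_affine (hσsum : ∀ h : List S, ∑ a, σ h a = 1) (h₀ : List S) :
    ∀ n (h : List S) (s : S), h.length < h₀.length →
      reachN q σ T n h s = ∑ a, σ h₀ a *
        reachN q (Function.update σ h₀ (fun b => if b = a then 1 else 0)) T n h s := by
  intro n
  induction n with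
  | zero =>
      intro h s _
      simp only [reachN]
      rw [← Finset.sum_mul, hσsum, one_mul]
  | succ n ih =>
      intro h s hlen
      by_cases hsT : s ∈ T
      · simp only [reachN, if_pos hsT, mul_one]
        rw [hσsum]
      · simp only [reachN, if_neg hsT]
        by_cases heq : h ++ [s] = h₀
        · -- the modified history is exactly the one used at this step
          subst heq
          have hupd : ∀ a : A,
              Function.update σ (h ++ [s]) (fun b => if b = a then 1 else 0) (h ++ [s])
                = fun b => if b = a then 1 else 0 := fun a => Function.update_self _ _ _
          simp only [hupd]
          have hcollapse : ∀ a : A,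
              (∑ b, (if b = a then (1:ℝ) else 0) *
                ∑ s', q s b s' * reachN q (Function.update σ (h ++ [s])
                  (fun b => if b = a then 1 else 0)) T n (h ++ [s]) s')
              = ∑ s', q s a s' * reachN q (Function.update σ (h ++ [s])
                  (fun b => if b = a then 1 else 0)) T n (h ++ [s]) s' := by
            intro a
            rw [Finset.sum_eq_single a]
            · simp
            · intro b _ hb; rw [if_neg hb, zero_mul]
            · intro hb; exact absurd (Finset.mem_univ a) hb
          calc ∑ b, σ (h ++ [s]) b * ∑ s', q s b s' * reachN q σ T n (h ++ [s]) s'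
              = ∑ a, σ (h ++ [s]) a * ∑ s', q s a s' *
                  reachN q (Function.update σ (h ++ [s])
                    (fun b => if b = a then 1 else 0)) T n (h ++ [s]) s' := by
                refine Finset.sum_congr rfl fun a _ => ?_
                congr 1
                refine Finset.sum_congr rfl fun s' _ => ?_
                congr 1
                refine (reachN_congr n (h ++ [s]) s' fun l hl1 _ => ?_).symm
                exact Function.update_of_ne (fun hc => by
                  rw [hc] at hl1; exact lt_irrefl _ hl1) _ _
            _ = ∑ a, σ (h ++ [s]) a *
                  ∑ b, (if b = a then (1:ℝ) else 0) *
                    ∑ s', q s b s' * reachN q (Function.update σ (h ++ [s])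
                      (fun b => if b = a then 1 else 0)) T n (h ++ [s]) s' := by
                refine Finset.sum_congr rfl fun a _ => ?_
                rw [hcollapse a]
        · -- the modified history is not used at this step
          have hupd : ∀ a : A,
              Function.update σ h₀ (fun b => if b = a then 1 else 0) (h ++ [s])
                = σ (h ++ [s]) := fun a => Function.update_of_ne heq _ _
          simp only [hupd]
          have key : ∀ s' : S, ∑ a, σ h₀ a *
              reachN q (Function.update σ h₀ (fun b => if b = a then 1 else 0)) T
                n (h ++ [s]) s' = reachN q σ T n (h ++ [s]) s' := by
            intro s'
            rcases Nat.lt_or_ge (h ++ [s]).length h₀.length with hlt | hge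
            · exact (ih (h ++ [s]) s' hlt).symm
            · have : ∀ a : A,
                  reachN q (Function.update σ h₀ (fun b => if b = a then 1 else 0)) T
                    n (h ++ [s]) s' = reachN q σ T n (h ++ [s]) s' := by
                intro a
                refine reachN_congr n (h ++ [s]) s' fun l hl1 _ => ?_
                exact Function.update_of_ne (fun hc => by
                  rw [hc] at hl1; omega) _ _
              simp only [this, ← Finset.sum_mul, hσsum, one_mul]
          rw [sum_mul_swap (fun a => σ h₀ a) (fun b => σ (h ++ [s]) b)]
          refine (Finset.sum_congr rfl fun b _ => ?_).symm
          congr 1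
          rw [sum_mul_swap (fun a => σ h₀ a) (fun s' => q s b s')]
          refine Finset.sum_congr rfl fun s' _ => ?_
          rw [key s']

end Affine

section Purify

variable [DecidableEq A]

lemma val_le_one {q : S → A → S → ℝ} (hq : IsKernel q) (hσ : IsPolicy σ)
    {ι : S → ℝ} (hι : (∀ s, 0 ≤ ι s) ∧ ∑ s, ι s = 1) (n : ℕ) :
    ∑ s, ι s * reachN q σ T n [] s ≤ 1 := by
  calc ∑ s, ι s * reachN q σ T n [] s ≤ ∑ s, ι s * 1 :=
        Finset.sum_le_sum fun s _ =>
          mul_le_mul_of_nonneg_left (reachN_le_one hq hσ n [] s) (hι.1 s)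
    _ = 1 := by simp [hι.2]

lemma update_isPolicy (hσ : IsPolicy σ) (h₀ : List S) (a : A) :
    IsPolicy (Function.update σ h₀ (fun b => if b = a then 1 else 0)) := by
  intro h
  by_cases hh : h = h₀
  · subst hh
    rw [Function.update_self]
    refine ⟨fun b => by positivity, ?_⟩
    rw [Finset.sum_ite_eq' Finset.univ a (fun _ => (1:ℝ))]
    simp
  · rw [Function.update_of_ne hh]
    exact hσ h

/-- Purification: given a winning policy (at a fixed finite horizon, in every
environment), we can make it deterministic on any finite list of histories
while staying winning. -/
lemma purify {I : Type*} {p : I → S → A → S → ℝ} (hker : ∀ i, IsKernel (p i))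
    {ι : S → ℝ} (hι : (∀ s, 0 ≤ ι s) ∧ ∑ s, ι s = 1) {T : Set S} (n : ℕ) :
    ∀ (L : List (List S)) (σ : List S → A → ℝ), IsPolicy σ →
      (∀ i, ∑ s, ι s * reachN (p i) σ T n [] s = 1) →
      ∃ σ' : List S → A → ℝ, IsPolicy σ' ∧
        (∀ i, ∑ s, ι s * reachN (p i) σ' T n [] s = 1) ∧
        (∀ l ∈ L, l ≠ [] → ∃ a : A, σ' l = fun b => if b = a then 1 else 0) ∧
        (∀ l ∉ L, σ' l = σ l) := by
  intro L
  induction L with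
  | nil => intro σ hσ hv; exact ⟨σ, hσ, hv, by simp, fun l _ => rfl⟩
  | cons h₀ L ih =>
      intro σ hσ hv
      by_cases hnil : h₀ = []
      · obtain ⟨σ', h1, h2, h3, h4⟩ := ih σ hσ hv
        refine ⟨σ', h1, h2, ?_, fun l hl => h4 l (fun h => hl (List.mem_cons_of_mem _ h))⟩
        intro l hl hlne
        rcases List.mem_cons.1 hl with rfl | hl'
        · exact absurd hnil hlne
        · exact h3 l hl' hlne
      · -- decompose the value as a convex combination over actions at h₀
        have hlen : ([] : List S).length < h₀.length := by
          cases h₀ with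
          | nil => exact absurd rfl hnil
          | cons x t => simp
        have hdecomp : ∀ i, ∑ s, ι s * reachN (p i) σ T n [] s
            = ∑ a, σ h₀ a * ∑ s, ι s *
                reachN (p i) (Function.update σ h₀ (fun b => if b = a then 1 else 0))
                  T n [] s := by
          intro i
          rw [show (∑ s, ι s * reachN (p i) σ T n [] s)
              = ∑ s, ι s * ∑ a, σ h₀ a *
                  reachN (p i) (Function.update σ h₀ (fun b => if b = a then 1 else 0))
                    T n [] s from
            Finset.sum_congr rfl fun s _ => by
              rw [reachN_affine (fun h => (hσ h).2) h₀ n [] s hlen]]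
          rw [sum_mul_swap ι (fun a => σ h₀ a)]
        -- pick an action with positive probability
        have hex : ∃ a : A, 0 < σ h₀ a := by
          have h01 : (0:ℝ) < 1 := one_pos
          rw [← (hσ h₀).2] at h01
          have hsum : ∑ _a : A, (0:ℝ) < ∑ a, σ h₀ a := by simpa using h01
          obtain ⟨a, _, ha⟩ := Finset.exists_lt_of_sum_lt hsum
          exact ⟨a, ha⟩
        obtain ⟨a, ha⟩ := hex
        set σa := Function.update σ h₀ (fun b => if b = a then 1 else 0) with hσa
        have hσa_pol : IsPolicy σa := update_isPolicy hσ h₀ a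
        have hva : ∀ i, ∑ s, ι s * reachN (p i) σa T n [] s = 1 := by
          intro i
          refine le_antisymm (val_le_one (hker i) hσa_pol hι n) ?_
          by_contra hlt
          push_neg at hlt
          have hstrict : ∑ b, σ h₀ b * ∑ s, ι s *
              reachN (p i) (Function.update σ h₀ (fun c => if c = b then 1 else 0))
                T n [] s < ∑ b, σ h₀ b * 1 := by
            refine Finset.sum_lt_sum (fun b _ => mul_le_mul_of_nonneg_left
              (val_le_one (hker i) (update_isPolicy hσ h₀ b) hι n) ((hσ h₀).1 b))
              ⟨a, Finset.mem_univ a, mul_lt_mul_of_pos_left hlt ha⟩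
          rw [← hdecomp i] at hstrict
          rw [hv i] at hstrict
          simp [(hσ h₀).2] at hstrict
        obtain ⟨σ', h1, h2, h3, h4⟩ := ih σa hσa_pol hva
        refine ⟨σ', h1, h2, ?_, ?_⟩
        · intro l hl hlne
          rcases List.mem_cons.1 hl with rfl | hl'
          · by_cases hmem : l ∈ L
            · exact h3 l hmem hlne
            · exact ⟨a, by rw [h4 l hmem, hσa, Function.update_self]⟩
          · exact h3 l hl' hlne
        · intro l hl
          have hl1 : l ∉ L := fun h => hl (List.mem_cons_of_mem _ h)
          have hl2 : l ≠ h₀ := fun h => hl (h ▸ List.mem_cons_self)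
          rw [h4 l hl1, hσa, Function.update_of_ne hl2]

/-- Every list of length at most `n` over a fintype occurs in some fixed list. -/
lemma exists_enum_lists (S : Type*) [Fintype S] :
    ∀ n : ℕ, ∃ L : List (List S), ∀ l : List S, l.length ≤ n → l ∈ L := by
  intro n
  induction n with
  | zero =>
      refine ⟨[[]], fun l hl => ?_⟩
      have : l = [] := List.length_eq_zero_iff.1 (Nat.le_zero.1 hl)
      simp [this]
  | succ n ih =>
      obtain ⟨L, hL⟩ := ih
      refine ⟨L ++ (L.map (fun t => (Finset.univ : Finset S).toList.map
        (fun s => s :: t))).flatten, fun l hl => ?_⟩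
      cases l with
      | nil => exact List.mem_append_left _ (hL [] (by simp))
      | cons s t =>
          refine List.mem_append_right _ ?_
          rw [List.mem_flatten]
          refine ⟨(Finset.univ : Finset S).toList.map (fun s' => s' :: t),
            List.mem_map_of_mem (hL t (by simpa using hl)), ?_⟩
          exact List.mem_map_of_mem (Finset.mem_toList.2 (Finset.mem_univ s))

end Purify

end Aux

/-- In an acyclic MEMDP, if there is a winning policy for an almost-sure
reachability objective, then there is a deterministic winning policy. -/
theorem acyclic_deterministic_suffices {S A I : Type*}
    [Fintype S] [Fintype A] [DecidableEq A]
    (p : I → S → A → S → ℝ) (hker : ∀ i, IsKernel (p i))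
    (ι : S → ℝ) (hι : (∀ s, 0 ≤ ι s) ∧ ∑ s, ι s = 1)
    (T : Set S) (hacyc : AcyclicMEMDP p)
    (hwin : ∃ σ, IsPolicy σ ∧ MemdpWinning p ι T σ) :
    ∃ d : List S → A,
      MemdpWinning p ι T (fun h a => if a = d h then 1 else 0) := by
  obtain ⟨σ, hpol, hwin⟩ := hwin
  have hA : Nonempty A := by
    by_contra hA
    rw [not_nonempty_iff] at hA
    have h1 := (hpol []).2
    rw [Finset.univ_eq_empty, Finset.sum_empty] at h1
    norm_num at h1
  set N := Fintype.card S with hN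
  have hacy1 : ∀ i, AcyclicOne (p i) := fun i s => hacyc i s
  have hfin : ∀ i, ∑ s, ι s * reachN (p i) σ T N [] s = 1 := fun i => by
    rw [← iSup_value_eq (hker i) hpol (hacy1 i) hι.1]; exact hwin i
  obtain ⟨L, hL⟩ := exists_enum_lists S N
  obtain ⟨σ', h1, h2, h3, -⟩ := purify hker hι N L σ hpol hfin
  obtain ⟨d, hd⟩ : ∃ d : List S → A, ∀ l : List S, l ≠ [] → l.length ≤ N →
      σ' l = fun b => if b = d l then 1 else 0 := by
    have hch : ∀ l : List S, ∃ a : A, (l ≠ [] → l.length ≤ N →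
        σ' l = fun b => if b = a then 1 else 0) := by
      intro l
      by_cases hc : l ≠ [] ∧ l.length ≤ N
      · obtain ⟨a, halx⟩ := h3 l (hL l hc.2) hc.1
        exact ⟨a, fun _ _ => halx⟩
      · exact ⟨Classical.arbitrary A, fun hx1 hx2 => absurd ⟨hx1, hx2⟩ hc⟩
    choose d hdd using hch
    exact ⟨d, hdd⟩
  refine ⟨d, fun i => ?_⟩
  have hpol_d : IsPolicy (fun h a => if a = d h then (1:ℝ) else 0) := by
    intro h
    constructor
    · intro a; dsimp only; split <;> norm_num
    · dsimp only
      rw [Finset.sum_ite_eq' Finset.univ (d h) (fun _ => (1:ℝ))]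
      simp
  rw [iSup_value_eq (hker i) hpol_d (hacy1 i) hι.1]
  have hagree : ∀ l : List S, ([] : List S).length < l.length →
      l.length ≤ ([] : List S).length + N →
      (fun a => if a = d l then (1:ℝ) else 0) = σ' l := by
    intro l hl1 hl2
    have hlne : l ≠ [] := by
      intro hc; rw [hc] at hl1; exact lt_irrefl _ hl1
    rw [hd l hlne (by simpa using hl2)]
  have : ∀ s : S, reachN (p i) (fun h a => if a = d h then (1:ℝ) else 0) T N [] s
      = reachN (p i) σ' T N [] s := fun s =>
    reachN_congr N [] s hagree
  rw [show (∑ s, ι s * reachN (p i) (fun h a => if a = d h then (1:ℝ) else 0) T N [] s)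
      = ∑ s, ι s * reachN (p i) σ' T N [] s from
    Finset.sum_congr rfl fun s _ => by rw [this s]]
  exact h2 i
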